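/- arXiv:1004.2140 — 2 statements merged into one kernel-verified Lean document; each statement's English description precedes it below -/
import Mathlib

section
/- Let W(x,y,z) = x^3 + y^3 + z^3 + s·xyz with 1 + s^3/27 ≠ 0. Then the Jacobi ring ℂ[x,y,z]/(3x^2+syz, 3y^2+sxz, 3z^2+sxy) is an 8-dimensional complex vector space with basis the images of the monomials 1, x, y, z, xy, yz, xz, xyz. -/
/-!
Write `x, y, z` for the classes of the variables and `g₀, g₁, g₂` for the three generators.
The relations `3x² = -s·yz` (and cyclically) turn squares into mixed quadratic monomials, and
`(27 + s³)·x²y = 9y·g₀ - 3sz·g₁ + s²x·g₂` (and similarly for the other five) shows that every cubic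
monomial other than `xyz` vanishes once `27 + s³ ≠ 0`. So the span of
`1, x, y, z, xy, yz, xz, xyz` is stable under multiplication by `x, y, z`, hence is everything.
For independence, the quotient maps onto an explicit algebra with coordinates along these eight
monomials, in which `x² = t·yz`, `y² = t·xz`, `z² = t·xy` for `t = -s/3` and `xyz` spans the
cubic part.
-/

open MvPolynomial

namespace Hesse

section Monomials

variable {A B : Type*}

def monomials [Monoid A] (x y z : A) : Fin 8 → A := ![1, x, y, z, x * y, y * z, x * z, x * y * z]

lemma map_comp_monomials [Monoid A] [Monoid B] {F : Type*} [FunLike F A B] [MonoidHomClass F A B]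
    (f : F) (x y z : A) : f ∘ monomials x y z = monomials (f x) (f y) (f z) := by
  funext i
  fin_cases i <;> simp [monomials]

lemma range_monomials_rotate [CommMonoid A] (x y z : A) :
    Set.range (monomials y z x) = Set.range (monomials x y z) := by
  ext v
  simp only [monomials, Matrix.range_cons, Matrix.range_empty, Set.union_empty,
    Set.mem_union, Set.mem_singleton_iff, mul_comm z x, mul_comm y x, mul_comm (y * z) x,
    ← mul_assoc]
  tauto

end Monomials

section JacobiTriple

variable {R A : Type*} [CommRing R] [CommRing A] [Algebra R A]

noncomputable def jacobianIdeal (s : R) : Ideal (MvPolynomial (Fin 3) R) :=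
  Ideal.span
    { 3 * X 0 ^ 2 + C s * X 1 * X 2,
      3 * X 1 ^ 2 + C s * X 0 * X 2,
      3 * X 2 ^ 2 + C s * X 0 * X 1 }

structure IsJacobiTriple (s : R) (x y z : A) : Prop where
  rel_x : 3 * x ^ 2 + algebraMap R A s * (y * z) = 0
  rel_y : 3 * y ^ 2 + algebraMap R A s * (x * z) = 0
  rel_z : 3 * z ^ 2 + algebraMap R A s * (x * y) = 0

lemma isJacobiTriple_iff_le_ker_aeval {s : R} {x y z : A} :
    IsJacobiTriple s x y z ↔ jacobianIdeal s ≤ RingHom.ker (aeval ![x, y, z]) := by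
  simp only [jacobianIdeal, Ideal.span_le, Set.insert_subset_iff, Set.singleton_subset_iff,
    SetLike.mem_coe, RingHom.mem_ker]
  simp only [map_add, map_mul, map_pow, map_ofNat, aeval_X, aeval_C, Matrix.cons_val_zero,
    Matrix.cons_val_one, Matrix.cons_val_two, mul_assoc]
  exact ⟨fun ⟨hx, hy, hz⟩ => ⟨hx, hy, hz⟩, fun ⟨hx, hy, hz⟩ => ⟨hx, hy, hz⟩⟩

lemma aeval_mk_X (I : Ideal (MvPolynomial (Fin 3) R)) :
    aeval ![Ideal.Quotient.mk I (X 0), Ideal.Quotient.mk I (X 1), Ideal.Quotient.mk I (X 2)]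
      = Ideal.Quotient.mkₐ R I := by
  ext i
  fin_cases i <;> simp

lemma isJacobiTriple_mk_X (s : R) :
    IsJacobiTriple s (Ideal.Quotient.mk (jacobianIdeal s) (X 0))
      (Ideal.Quotient.mk (jacobianIdeal s) (X 1)) (Ideal.Quotient.mk (jacobianIdeal s) (X 2)) := by
  rw [isJacobiTriple_iff_le_ker_aeval, aeval_mk_X]
  intro p hp
  simpa [RingHom.mem_ker, Ideal.Quotient.eq_zero_iff_mem] using hp

lemma adjoin_range_mk_X_eq_top (I : Ideal (MvPolynomial (Fin 3) R)) :
    Algebra.adjoin R (Set.range ![Ideal.Quotient.mk I (X 0), Ideal.Quotient.mk I (X 1),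
      Ideal.Quotient.mk I (X 2)]) = ⊤ := by
  rw [Algebra.adjoin_range_eq_range_aeval, aeval_mk_X, AlgHom.range_eq_top]
  exact Ideal.Quotient.mkₐ_surjective R I

namespace IsJacobiTriple

variable {s : R} {x y z : A}

lemma rotate (h : IsJacobiTriple s x y z) : IsJacobiTriple s y z x :=
  ⟨by linear_combination h.rel_y, by linear_combination h.rel_z, by linear_combination h.rel_x⟩

variable {K : Type*} [Field K] [Algebra K A] {s : K}

lemma sq_eq_smul (h : IsJacobiTriple s x y z) (h3 : (3 : K) ≠ 0) :
    x ^ 2 = (-s / 3) • (y * z) := by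
  have hu : algebraMap K A 3⁻¹ * 3 = 1 := by
    rw [← map_ofNat (algebraMap K A) 3, ← map_mul, inv_mul_cancel₀ h3, map_one]
  rw [Algebra.smul_def, div_eq_mul_inv, map_mul, map_neg]
  linear_combination algebraMap K A 3⁻¹ * h.rel_x - x ^ 2 * hu

lemma isUnit_27_add_cube (hs : 27 + s ^ 3 ≠ 0) : IsUnit (27 + algebraMap K A s ^ 3) := by
  have := (Ne.isUnit hs).map (algebraMap K A)
  rwa [map_add, map_pow, map_ofNat] at this

lemma sq_mul_y_eq_zero (h : IsJacobiTriple s x y z) (hs : 27 + s ^ 3 ≠ 0) : x ^ 2 * y = 0 :=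
  (isUnit_27_add_cube hs).mul_right_eq_zero.mp <| by
    linear_combination 9 * y * h.rel_x - 3 * algebraMap K A s * z * h.rel_y
      + algebraMap K A s ^ 2 * x * h.rel_z

lemma sq_mul_z_eq_zero (h : IsJacobiTriple s x y z) (hs : 27 + s ^ 3 ≠ 0) : x ^ 2 * z = 0 :=
  (isUnit_27_add_cube hs).mul_right_eq_zero.mp <| by
    linear_combination 9 * z * h.rel_x + algebraMap K A s ^ 2 * x * h.rel_y
      - 3 * algebraMap K A s * y * h.rel_z

lemma mul_mem_span_monomials (h : IsJacobiTriple s x y z) (h3 : (3 : K) ≠ 0)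
    (hs : 27 + s ^ 3 ≠ 0) {v : A} (hv : v ∈ Submodule.span K (Set.range (monomials x y z))) :
    x * v ∈ Submodule.span K (Set.range (monomials x y z)) := by
  set N := Submodule.span K (Set.range (monomials x y z))
  have mem (k : Fin 8) : monomials x y z k ∈ N := Submodule.subset_span ⟨k, rfl⟩
  induction hv using Submodule.span_induction with
  | zero => simp
  | add u w _ _ hu hw => simpa [mul_add] using N.add_mem hu hw
  | smul c u _ hu => simpa [mul_smul_comm] using N.smul_mem c hu
  | mem u hu =>
    obtain ⟨j, rfl⟩ := hu
    fin_cases j <;> simp only [monomials, Fin.reduceFinMk, Matrix.cons_val]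
    · rw [mul_one]; exact mem 1
    · rw [← sq, h.sq_eq_smul h3]; exact N.smul_mem _ (mem 5)
    · exact mem 4
    · exact mem 6
    · rw [← mul_assoc, ← sq, h.sq_mul_y_eq_zero hs]; exact N.zero_mem
    · rw [← mul_assoc]; exact mem 7
    · rw [← mul_assoc, ← sq, h.sq_mul_z_eq_zero hs]; exact N.zero_mem
    · rw [← mul_assoc, ← mul_assoc, ← sq, h.sq_mul_y_eq_zero hs, zero_mul]; exact N.zero_mem

theorem span_monomials_eq_top (h : IsJacobiTriple s x y z) (h3 : (3 : K) ≠ 0)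
    (hs : 27 + s ^ 3 ≠ 0) (hgen : Algebra.adjoin K (Set.range ![x, y, z]) = ⊤) :
    Submodule.span K (Set.range (monomials x y z)) = ⊤ := by
  set N := Submodule.span K (Set.range (monomials x y z))
  suffices ∀ a ∈ Algebra.adjoin K (Set.range ![x, y, z]), ∀ v ∈ N, a * v ∈ N by
    refine eq_top_iff.mpr fun a _ => ?_
    simpa using this a (hgen ▸ Algebra.mem_top) 1 (Submodule.subset_span ⟨0, rfl⟩)
  intro a ha
  induction ha using Algebra.adjoin_induction with
  | mem a ha =>
    obtain ⟨i, rfl⟩ := ha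
    fin_cases i
    · exact fun v hv => h.mul_mem_span_monomials h3 hs hv
    · show ∀ v ∈ N, y * v ∈ N
      simpa only [N, ← range_monomials_rotate x y z] using
        fun v hv => h.rotate.mul_mem_span_monomials h3 hs hv
    · show ∀ v ∈ N, z * v ∈ N
      simpa only [N, ← range_monomials_rotate y z x, ← range_monomials_rotate x y z] using
        fun v hv => h.rotate.rotate.mul_mem_span_monomials h3 hs hv
  | algebraMap c => exact fun v hv => by simpa [← Algebra.smul_def] using N.smul_mem c hv
  | add a b _ _ ha hb => exact fun v hv => by simpa [add_mul] using N.add_mem (ha v hv) (hb v hv)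
  | mul a b _ _ ha hb => exact fun v hv => by simpa [mul_assoc] using ha _ (hb v hv)

end IsJacobiTriple

end JacobiTriple

@[ext]
structure JacobiModel {R : Type*} [CommRing R] (t : R) where
  c1 : R
  cx : R
  cy : R
  cz : R
  cxy : R
  cyz : R
  cxz : R
  cxyz : R

namespace JacobiModel

variable {R : Type*} [CommRing R] {t : R}

@[simps] instance : Zero (JacobiModel t) := ⟨⟨0, 0, 0, 0, 0, 0, 0, 0⟩⟩

@[simps] instance : One (JacobiModel t) := ⟨⟨1, 0, 0, 0, 0, 0, 0, 0⟩⟩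

@[simps] instance : Add (JacobiModel t) :=
  ⟨fun a b => ⟨a.c1 + b.c1, a.cx + b.cx, a.cy + b.cy, a.cz + b.cz,
    a.cxy + b.cxy, a.cyz + b.cyz, a.cxz + b.cxz, a.cxyz + b.cxyz⟩⟩

@[simps] instance : Neg (JacobiModel t) :=
  ⟨fun a => ⟨-a.c1, -a.cx, -a.cy, -a.cz, -a.cxy, -a.cyz, -a.cxz, -a.cxyz⟩⟩

-- the multiplication of `R[x,y,z] / (x² - t·yz, y² - t·xz, z² - t·xy, x²y, x²z, y²x, y²z, z²x, z²y)`
@[simps] instance : Mul (JacobiModel t) :=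
  ⟨fun a b =>
    { c1 := a.c1 * b.c1
      cx := a.c1 * b.cx + a.cx * b.c1
      cy := a.c1 * b.cy + a.cy * b.c1
      cz := a.c1 * b.cz + a.cz * b.c1
      cxy := a.c1 * b.cxy + a.cxy * b.c1 + a.cx * b.cy + a.cy * b.cx + t * a.cz * b.cz
      cyz := a.c1 * b.cyz + a.cyz * b.c1 + a.cy * b.cz + a.cz * b.cy + t * a.cx * b.cx
      cxz := a.c1 * b.cxz + a.cxz * b.c1 + a.cx * b.cz + a.cz * b.cx + t * a.cy * b.cy
      cxyz := a.c1 * b.cxyz + a.cxyz * b.c1 + a.cx * b.cyz + a.cyz * b.cx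
        + a.cy * b.cxz + a.cxz * b.cy + a.cz * b.cxy + a.cxy * b.cz }⟩

instance : CommRing (JacobiModel t) where
  add_assoc a b c := by ext <;> simp <;> ring
  zero_add a := by ext <;> simp
  add_zero a := by ext <;> simp
  add_comm a b := by ext <;> simp <;> ring
  neg_add_cancel a := by ext <;> simp
  left_distrib a b c := by ext <;> simp <;> ring
  right_distrib a b c := by ext <;> simp <;> ring
  zero_mul a := by ext <;> simp
  mul_zero a := by ext <;> simp
  mul_assoc a b c := by ext <;> simp <;> ring
  one_mul a := by ext <;> simp
  mul_one a := by ext <;> simp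
  mul_comm a b := by ext <;> simp <;> ring
  nsmul := nsmulRec
  zsmul := zsmulRec

@[simps] def ofScalar (t : R) : R →+* JacobiModel t where
  toFun r := ⟨r, 0, 0, 0, 0, 0, 0, 0⟩
  map_one' := rfl
  map_mul' r r' := by ext <;> simp
  map_zero' := rfl
  map_add' r r' := by ext <;> simp

instance : Algebra R (JacobiModel t) := (ofScalar t).toAlgebra

@[simps] def x : JacobiModel t := ⟨0, 1, 0, 0, 0, 0, 0, 0⟩
@[simps] def y : JacobiModel t := ⟨0, 0, 1, 0, 0, 0, 0, 0⟩
@[simps] def z : JacobiModel t := ⟨0, 0, 0, 1, 0, 0, 0, 0⟩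

lemma isJacobiTriple {s : R} (ht : 3 * t + s = 0) : IsJacobiTriple s (x : JacobiModel t) y z := by
  refine ⟨?_, ?_, ?_⟩ <;> rw [← map_ofNat (ofScalar t) 3] <;> ext <;>
    simp [RingHom.algebraMap_toAlgebra, pow_two] <;> linear_combination ht

lemma linearIndependent_monomials : LinearIndependent R (monomials (x : JacobiModel t) y z) := by
  rw [Fintype.linearIndependent_iff]
  intro g hg
  simp [Fin.sum_univ_eight, monomials, JacobiModel.ext_iff, Algebra.smul_def,
    RingHom.algebraMap_toAlgebra] at hg
  intro i
  fin_cases i <;> simp [hg]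

end JacobiModel

variable {R : Type*} [CommRing R]

theorem linearIndependent_mk_monomials {s t : R} (ht : 3 * t + s = 0) :
    LinearIndependent R (Ideal.Quotient.mk (jacobianIdeal s) ∘ monomials (X 0) (X 1) (X 2)) := by
  have hker := isJacobiTriple_iff_le_ker_aeval.mp (JacobiModel.isJacobiTriple ht)
  let g := Ideal.Quotient.liftₐ (jacobianIdeal s) (aeval ![JacobiModel.x, .y, .z]) hker
  have hg (p) : g (Ideal.Quotient.mk _ p) = aeval ![JacobiModel.x, .y, .z] p := rfl
  refine LinearIndependent.of_comp g.toLinearMap ?_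
  convert JacobiModel.linearIndependent_monomials (t := t) using 1
  funext i
  fin_cases i <;> simp [monomials, hg]

theorem span_mk_monomials_eq_top {K : Type*} [Field K] (h3 : (3 : K) ≠ 0) {s : K}
    (hs : 27 + s ^ 3 ≠ 0) :
    Submodule.span K (Set.range (Ideal.Quotient.mk (jacobianIdeal s) ∘ monomials (X 0) (X 1) (X 2)))
      = ⊤ := by
  rw [map_comp_monomials]
  exact (isJacobiTriple_mk_X s).span_monomials_eq_top h3 hs (adjoin_range_mk_X_eq_top _)

end Hesse

/-- For `W = x³+y³+z³+s·xyz` with `1+s³/27 ≠ 0`, the Jacobi ring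
`ℂ[x,y,z]/(3x²+syz, 3y²+sxz, 3z²+sxy)` is an 8-dimensional complex vector space
with basis the images of `1, x, y, z, xy, yz, xz, xyz`. -/
theorem stmt2 (s : ℂ) (hs : 1 + s ^ 3 / 27 ≠ 0)
    (I : Ideal (MvPolynomial (Fin 3) ℂ))
    (hI : I = Ideal.span
      { 3 * X 0 ^ 2 + C s * X 1 * X 2,
        3 * X 1 ^ 2 + C s * X 0 * X 2,
        3 * X 2 ^ 2 + C s * X 0 * X 1 })
    (φ : Fin 8 → MvPolynomial (Fin 3) ℂ)
    (hφ : φ = ![1, X 0, X 1, X 2, X 0 * X 1, X 1 * X 2, X 0 * X 2, X 0 * X 1 * X 2]) :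
    Module.finrank ℂ (MvPolynomial (Fin 3) ℂ ⧸ I) = 8 ∧
      LinearIndependent ℂ (fun i => Ideal.Quotient.mk I (φ i)) ∧
      Submodule.span ℂ (Set.range fun i => Ideal.Quotient.mk I (φ i)) = ⊤ := by
  subst hI hφ
  have h27 : (27 : ℂ) + s ^ 3 ≠ 0 := by
    contrapose! hs
    linear_combination hs / 27
  have hli := Hesse.linearIndependent_mk_monomials (s := s) (t := -s / 3) (by ring)
  have hspan := Hesse.span_mk_monomials_eq_top three_ne_zero h27
  exact ⟨(Module.finrank_eq_card_basis (.mk hli hspan.ge)).trans (Fintype.card_fin 8), hli, hspan⟩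
end

section
/- Let g(u) = ₂F₁(1/3, 1/3, 2/3; u) and h(u) = ₂F₁(2/3, 2/3, 4/3; u), and define for s near 0 (with u = -s³/27) the function t(s) = s·h(u)/g(u). Then dt/ds = 1/((1-u)·g(u)²), i.e. for the inverse function s(t) one has ds/dt = (1-u)·g(u)² evaluated at u = -s(t)³/27. -/
/-!
The substitution `u = -s³/27` satisfies `s · du/ds = 3u`, so with the Euler operator `θ = u d/du`
the quotient rule gives `dt/ds = (h g + 3 (θh · g - h · θg)) / g²`. Up to the factor `u^{1/3}/3`,
the numerator is the Wronskian of the two solutions `g` and `u^{1/3} h` of the hypergeometric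
equation with `a = b = 1/3`, `c = 2/3`, so `(1 - u)` times it is constant, equal to `1` at `u = 0`.
On coefficients this says that the coefficient `P n` of `u ^ n` in `h g + 3 (θh · g - h · θg)`
is `1` for every `n`: `P (n + 1) = P n` is a telescoping identity using only the two-term
recurrences of the hypergeometric coefficients. The Cauchy product then identifies the numerator
with `∑ u ^ n = 1 / (1 - u)`.
-/

/-- The Gauss hypergeometric series `₂F₁(a,b,c;u)`. -/
noncomputable def hyp2F1 (a b c u : ℂ) : ℂ :=
  ∑' n : ℕ, ((∏ i ∈ Finset.range n, (a + i)) * (∏ i ∈ Finset.range n, (b + i)) /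
    ((∏ i ∈ Finset.range n, (c + i)) * (n.factorial : ℂ))) * u ^ n

open Finset Filter Topology

noncomputable def hypCoeff (a b c : ℂ) (n : ℕ) : ℂ :=
  (∏ i ∈ range n, (a + i)) * (∏ i ∈ range n, (b + i)) /
    ((∏ i ∈ range n, (c + i)) * (n.factorial : ℂ))

section Coefficients

variable (a b c : ℂ)

theorem hyp2F1_eq_tsum (u : ℂ) : hyp2F1 a b c u = ∑' n, hypCoeff a b c n * u ^ n := rfl

@[simp]
theorem hypCoeff_zero : hypCoeff a b c 0 = 1 := by
  simp [hypCoeff]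

theorem hypCoeff_succ (n : ℕ) :
    hypCoeff a b c (n + 1) = hypCoeff a b c n * ((a + n) * (b + n) / ((n + 1) * (c + n))) := by
  simp only [hypCoeff, prod_range_succ, Nat.factorial_succ, Nat.cast_mul, Nat.cast_succ]
  rw [div_mul_div_comm]
  congr 1 <;> ring

theorem hypCoeff_succ_mul {n : ℕ} (hc : c + n ≠ 0) :
    hypCoeff a b c (n + 1) * ((n + 1) * (c + n)) = hypCoeff a b c n * ((a + n) * (b + n)) := by
  rw [hypCoeff_succ]
  field_simp

variable {a b c}

theorem norm_hypCoeff_le_one (h : ∀ n : ℕ, ‖(a + n) * (b + n)‖ ≤ ‖(n + 1) * (c + n)‖) (n : ℕ) :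
    ‖hypCoeff a b c n‖ ≤ 1 := by
  induction n with
  | zero => simp
  | succ n ih =>
    rw [hypCoeff_succ, norm_mul, norm_div]
    exact mul_le_one₀ ih (by positivity) (div_le_one_of_le₀ (h n) (norm_nonneg _))

theorem norm_coeff_ratio_le_of_real {a b c : ℝ} (ha : 0 ≤ a) (hb : 0 ≤ b)
    (h : ∀ n : ℕ, (a + n) * (b + n) ≤ (n + 1) * (c + n)) (n : ℕ) :
    ‖((a : ℂ) + n) * (b + n)‖ ≤ ‖((n : ℂ) + 1) * (c + n)‖ := by
  have hab : 0 ≤ (a + n) * (b + n) := by positivity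
  rw [← Complex.ofReal_natCast, ← Complex.ofReal_one]
  simp only [← Complex.ofReal_add, ← Complex.ofReal_mul, Complex.norm_real, Real.norm_eq_abs,
    abs_of_nonneg hab, abs_of_nonneg (hab.trans (h n))]
  exact h n

end Coefficients

section PowerSeries

variable {c : ℕ → ℂ} {u : ℂ}

theorem summable_norm_mul_pow_of_norm_le {C : ℝ} (hc : ∀ n, ‖c n‖ ≤ C * (n + 1)) (hu : ‖u‖ < 1) :
    Summable fun n => ‖c n * u ^ n‖ := by
  have hu' : ‖‖u‖‖ < 1 := by rwa [norm_norm]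
  have hbound : Summable fun n : ℕ => C * ((n : ℝ) ^ 1 * ‖u‖ ^ n + ‖u‖ ^ n) :=
    ((summable_pow_mul_geometric_of_norm_lt_one 1 hu').add
      (summable_geometric_of_lt_one (norm_nonneg u) hu)).mul_left C
  refine hbound.of_nonneg_of_le (fun n => norm_nonneg _) fun n => ?_
  rw [norm_mul, norm_pow]
  calc ‖c n‖ * ‖u‖ ^ n ≤ C * (n + 1) * ‖u‖ ^ n := by gcongr; exact hc n
    _ = C * ((n : ℝ) ^ 1 * ‖u‖ ^ n + ‖u‖ ^ n) := by ring

theorem summable_natCast_mul_pow_sub_one {r : ℝ} (hr₀ : 0 ≤ r) (hr : r < 1) :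
    Summable fun n : ℕ => (n : ℝ) * r ^ (n - 1) := by
  refine (summable_nat_add_iff 1).mp ?_
  simpa [add_mul] using
    (summable_pow_mul_geometric_of_norm_lt_one 1 (by rwa [Real.norm_of_nonneg hr₀])).add
      (summable_geometric_of_lt_one hr₀ hr)

theorem hasDerivAt_tsum_mul_pow (hc : ∀ n, ‖c n‖ ≤ 1) (hu : ‖u‖ < 1) :
    HasDerivAt (fun z => ∑' n, c n * z ^ n) (∑' n, c n * (n * u ^ (n - 1))) u := by
  obtain ⟨r, hur, hr⟩ := exists_between hu
  have hr₀ : 0 ≤ r := (norm_nonneg u).trans hur.le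
  refine hasDerivAt_tsum_of_isPreconnected (summable_natCast_mul_pow_sub_one hr₀ hr)
    Metric.isOpen_ball (convex_ball 0 r).isPreconnected
    (fun n y _ => (hasDerivAt_pow n y).const_mul (c n)) (fun n y hy => ?_)
    (Metric.mem_ball_self ((norm_nonneg u).trans_lt hur)) ?_ (mem_ball_zero_iff.mpr hur)
  · rw [mem_ball_zero_iff] at hy
    rw [norm_mul, norm_mul, norm_pow, Complex.norm_natCast]
    calc ‖c n‖ * (n * ‖y‖ ^ (n - 1)) ≤ 1 * (n * r ^ (n - 1)) := by gcongr; exact hc n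
      _ = n * r ^ (n - 1) := one_mul _
  · exact (hasSum_single 0 fun n hn => by simp [hn]).summable

theorem mul_tsum_mul_natCast_mul_pow_sub_one (c : ℕ → ℂ) (u : ℂ) :
    u * ∑' n, c n * (n * u ^ (n - 1)) = ∑' n, n * c n * u ^ n := by
  rw [← tsum_mul_left]
  refine tsum_congr fun n => ?_
  rcases n with _ | n
  · simp
  · rw [Nat.add_sub_cancel, pow_succ]
    ring

theorem hasSum_antidiagonal_mul_pow {f g : ℕ → ℂ} (hf : Summable fun n => ‖f n * u ^ n‖)
    (hg : Summable fun n => ‖g n * u ^ n‖) :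
    HasSum (fun n => (∑ p ∈ antidiagonal n, f p.1 * g p.2) * u ^ n)
      ((∑' n, f n * u ^ n) * (∑' n, g n * u ^ n)) := by
  have hterm : ∀ n, (∑ p ∈ antidiagonal n, f p.1 * g p.2) * u ^ n =
      ∑ p ∈ antidiagonal n, f p.1 * u ^ p.1 * (g p.2 * u ^ p.2) := fun n => by
    rw [sum_mul]
    refine sum_congr rfl fun p hp => ?_
    rw [← mem_antidiagonal.mp hp, pow_add]
    ring
  simp_rw [hterm, tsum_mul_tsum_eq_tsum_sum_antidiagonal_of_summable_norm hf hg]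
  exact (summable_norm_sum_mul_antidiagonal_of_summable_norm hf hg).of_norm.hasSum

end PowerSeries

/-- The coefficient of `u ^ n` in `h g + 3 (θh · g - h · θg)`, where `g = ∑ α n u ^ n`,
`h = ∑ β n u ^ n` and `θ = u d/du`. -/
def wronskianCoeff (α β : ℕ → ℂ) (n : ℕ) : ℂ :=
  ∑ p ∈ antidiagonal n, β p.1 * α p.2 * (1 + 3 * p.1 - 3 * p.2)

theorem wronskianCoeff_succ {α β : ℕ → ℂ}
    (hα : ∀ l : ℕ, α (l + 1) * ((l + 1) * (2 / 3 + l)) = α l * ((1 / 3 + l) * (1 / 3 + l)))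
    (hβ : ∀ k : ℕ, β (k + 1) * ((k + 1) * (4 / 3 + k)) = β k * ((2 / 3 + k) * (2 / 3 + k)))
    (n : ℕ) : wronskianCoeff α β (n + 1) = wronskianCoeff α β n := by
  let T : ℕ × ℕ → ℂ := fun p => β p.1 * α p.2 * (1 + 3 * p.1 - 3 * p.2)
  let Q : ℕ × ℕ → ℂ := fun p => p.1 * (3 * p.1 + 1) * β p.1 * α p.2
  have hstep : ∀ p ∈ antidiagonal n,
      (n + 1) * (T (p.1, p.2 + 1) - T p) = Q (p.1, p.2 + 1) - Q (p.1 + 1, p.2) := by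
    intro p hp
    have hn : (n : ℂ) = p.1 + p.2 := by exact_mod_cast (mem_antidiagonal.mp hp).symm
    simp only [T, Q, hn, Nat.cast_add, Nat.cast_one]
    linear_combination (-3 * β p.1) * hα p.2 + 3 * α p.2 * hβ p.1
  have hsum := sum_congr rfl hstep
  rw [← mul_sum, sum_sub_distrib, sum_sub_distrib] at hsum
  have hP : wronskianCoeff α β (n + 1) = T (n + 1, 0) + ∑ p ∈ antidiagonal n, T (p.1, p.2 + 1) :=
    Nat.sum_antidiagonal_succ'
  have hQ' : ∑ p ∈ antidiagonal (n + 1), Q p =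
      Q (n + 1, 0) + ∑ p ∈ antidiagonal n, Q (p.1, p.2 + 1) :=
    Nat.sum_antidiagonal_succ'
  have hQ : ∑ p ∈ antidiagonal (n + 1), Q p =
      Q (0, n + 1) + ∑ p ∈ antidiagonal n, Q (p.1 + 1, p.2) :=
    Nat.sum_antidiagonal_succ
  have hn : (n : ℂ) + 1 ≠ 0 := by exact_mod_cast n.succ_ne_zero
  refine mul_left_cancel₀ hn ?_
  -- summed over the antidiagonal, the `Q`-terms of `hstep` telescope to `-Q (n + 1, 0)`,
  -- which cancels `(n + 1) * T (n + 1, 0)`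
  simp only [T, Q, Nat.cast_zero, Nat.cast_add, Nat.cast_one] at hP hQ hQ' hsum
  unfold wronskianCoeff at hP ⊢
  linear_combination (n + 1) * hP + hsum - hQ' + hQ

theorem wronskianCoeff_eq {α β : ℕ → ℂ}
    (hα : ∀ l : ℕ, α (l + 1) * ((l + 1) * (2 / 3 + l)) = α l * ((1 / 3 + l) * (1 / 3 + l)))
    (hβ : ∀ k : ℕ, β (k + 1) * ((k + 1) * (4 / 3 + k)) = β k * ((2 / 3 + k) * (2 / 3 + k)))
    (n : ℕ) : wronskianCoeff α β n = β 0 * α 0 := by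
  induction n with
  | zero => simp [wronskianCoeff]
  | succ n ih => rw [wronskianCoeff_succ hα hβ, ih]

theorem hasSum_wronskianCoeff_mul_pow {α β : ℕ → ℂ} {u : ℂ} (hα : ∀ n, ‖α n‖ ≤ 1)
    (hβ : ∀ n, ‖β n‖ ≤ 1) (hu : ‖u‖ < 1) :
    HasSum (fun n => wronskianCoeff α β n * u ^ n)
      ((∑' n, β n * u ^ n) * (∑' n, α n * u ^ n) +
        3 * ((∑' n, n * β n * u ^ n) * (∑' n, α n * u ^ n) -
          (∑' n, β n * u ^ n) * (∑' n, n * α n * u ^ n))) := by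
  have hplain {c : ℕ → ℂ} (hc : ∀ n, ‖c n‖ ≤ 1) : Summable fun n => ‖c n * u ^ n‖ :=
    summable_norm_mul_pow_of_norm_le (C := 1)
      (fun n => (hc n).trans (by linarith [(n.cast_nonneg : (0 : ℝ) ≤ n)])) hu
  have hweighted {c : ℕ → ℂ} (hc : ∀ n, ‖c n‖ ≤ 1) : Summable fun n => ‖n * c n * u ^ n‖ :=
    summable_norm_mul_pow_of_norm_le (C := 1) (fun n => by
      rw [norm_mul, Complex.norm_natCast]
      nlinarith [hc n, norm_nonneg (c n), (n.cast_nonneg : (0 : ℝ) ≤ n)]) hu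
  have h := (hasSum_antidiagonal_mul_pow (hplain hβ) (hplain hα)).add
    (((hasSum_antidiagonal_mul_pow (hweighted hβ) (hplain hα)).sub
      (hasSum_antidiagonal_mul_pow (hplain hβ) (hweighted hα))).mul_left 3)
  convert h using 2 with n
  simp only [wronskianCoeff, sum_mul, mul_sum, ← sum_sub_distrib, ← sum_add_distrib]
  refine sum_congr rfl fun p _ => ?_
  ring

/-- `θ ₂F₁(a,b,c;u)` for the Euler operator `θ = u d/du`. -/
noncomputable def hyp2F1Euler (a b c u : ℂ) : ℂ :=
  ∑' n : ℕ, n * hypCoeff a b c n * u ^ n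

section Analytic

variable {a b c : ℂ}

theorem hyp2F1_zero : hyp2F1 a b c 0 = 1 := by
  rw [hyp2F1_eq_tsum, tsum_eq_single 0 fun n hn => by simp [hn]]
  simp

theorem exists_hasDerivAt_hyp2F1 (h : ∀ n : ℕ, ‖(a + n) * (b + n)‖ ≤ ‖(n + 1) * (c + n)‖)
    {u : ℂ} (hu : ‖u‖ < 1) :
    ∃ D, HasDerivAt (hyp2F1 a b c) D u ∧ u * D = hyp2F1Euler a b c u :=
  ⟨_, hasDerivAt_tsum_mul_pow (norm_hypCoeff_le_one h) hu,
    mul_tsum_mul_natCast_mul_pow_sub_one _ _⟩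

theorem eventually_hyp2F1_ne_zero (h : ∀ n : ℕ, ‖(a + n) * (b + n)‖ ≤ ‖(n + 1) * (c + n)‖) :
    ∀ᶠ u in 𝓝 0, hyp2F1 a b c u ≠ 0 := by
  obtain ⟨D, hD, -⟩ := exists_hasDerivAt_hyp2F1 h (u := 0) (by simp)
  exact hD.continuousAt.eventually_ne (by simp [hyp2F1_zero])

end Analytic

theorem norm_coeff_ratio_le_g (n : ℕ) :
    ‖((1 : ℂ) / 3 + n) * (1 / 3 + n)‖ ≤ ‖((n : ℂ) + 1) * (2 / 3 + n)‖ := by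
  simpa using norm_coeff_ratio_le_of_real (a := 1 / 3) (b := 1 / 3) (c := 2 / 3) (by norm_num)
    (by norm_num) (fun n => by nlinarith [(n.cast_nonneg : (0 : ℝ) ≤ n)]) n

theorem norm_coeff_ratio_le_h (n : ℕ) :
    ‖((2 : ℂ) / 3 + n) * (2 / 3 + n)‖ ≤ ‖((n : ℂ) + 1) * (4 / 3 + n)‖ := by
  simpa using norm_coeff_ratio_le_of_real (a := 2 / 3) (b := 2 / 3) (c := 4 / 3) (by norm_num)
    (by norm_num) (fun n => by nlinarith [(n.cast_nonneg : (0 : ℝ) ≤ n)]) n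

theorem hyp2F1_wronskian {u : ℂ} (hu : ‖u‖ < 1) :
    (1 - u) * (hyp2F1 (2 / 3) (2 / 3) (4 / 3) u * hyp2F1 (1 / 3) (1 / 3) (2 / 3) u +
      3 * (hyp2F1Euler (2 / 3) (2 / 3) (4 / 3) u * hyp2F1 (1 / 3) (1 / 3) (2 / 3) u -
        hyp2F1 (2 / 3) (2 / 3) (4 / 3) u * hyp2F1Euler (1 / 3) (1 / 3) (2 / 3) u)) = 1 := by
  have hden (q : ℝ) (hq : 0 < q) (n : ℕ) : (q : ℂ) + n ≠ 0 := by
    exact_mod_cast (by positivity : (0 : ℝ) < q + n).ne'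
  have hW : ∀ n, wronskianCoeff (hypCoeff (1 / 3) (1 / 3) (2 / 3))
      (hypCoeff (2 / 3) (2 / 3) (4 / 3)) n = 1 := fun n => by
    rw [wronskianCoeff_eq
      (fun l => hypCoeff_succ_mul _ _ _ (by simpa using hden (2 / 3) (by norm_num) l))
      (fun k => hypCoeff_succ_mul _ _ _ (by simpa using hden (4 / 3) (by norm_num) k))]
    simp
  have h := hasSum_wronskianCoeff_mul_pow (norm_hypCoeff_le_one norm_coeff_ratio_le_g)
    (norm_hypCoeff_le_one norm_coeff_ratio_le_h) hu
  simp only [hW, one_mul] at h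
  simp only [hyp2F1_eq_tsum, hyp2F1Euler]
  rw [h.unique (hasSum_geometric_of_norm_lt_one hu)]
  exact mul_inv_cancel₀ (sub_ne_zero.mpr fun h1 => by simp [← h1] at hu)

theorem hasDerivAt_flat_coordinate {s : ℂ} (hu : ‖-(s ^ 3) / 27‖ < 1)
    (hg : hyp2F1 (1 / 3) (1 / 3) (2 / 3) (-(s ^ 3) / 27) ≠ 0) :
    HasDerivAt
      (fun z : ℂ => z * hyp2F1 (2 / 3) (2 / 3) (4 / 3) (-(z ^ 3) / 27) /
        hyp2F1 (1 / 3) (1 / 3) (2 / 3) (-(z ^ 3) / 27))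
      (1 / ((1 - (-(s ^ 3) / 27)) * (hyp2F1 (1 / 3) (1 / 3) (2 / 3) (-(s ^ 3) / 27)) ^ 2)) s := by
  have hcube : HasDerivAt (fun z : ℂ => -(z ^ 3) / 27) (-(3 * s ^ 2) / 27) s := by
    simpa using ((hasDerivAt_pow 3 s).neg.div_const 27)
  obtain ⟨Dg, hDg, hθg⟩ := exists_hasDerivAt_hyp2F1 norm_coeff_ratio_le_g hu
  obtain ⟨Dh, hDh, hθh⟩ := exists_hasDerivAt_hyp2F1 norm_coeff_ratio_le_h hu
  have hW := hyp2F1_wronskian hu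
  have h1u : 1 - (-(s ^ 3) / 27) ≠ 0 := left_ne_zero_of_mul_eq_one hW
  rw [← hθg, ← hθh] at hW
  have hg' := hDg.comp s hcube
  have hh' := hDh.comp s hcube
  rw [Function.comp_def] at hg' hh'
  refine (((hasDerivAt_id' s).fun_mul hh').fun_div hg' hg).congr_deriv ?_
  rw [div_eq_div_iff (pow_ne_zero 2 hg) (mul_ne_zero h1u (pow_ne_zero 2 hg))]
  linear_combination hyp2F1 (1 / 3) (1 / 3) (2 / 3) (-(s ^ 3) / 27) ^ 2 * hW

/-- With `g(u) = ₂F₁(1/3,1/3,2/3;u)`, `h(u) = ₂F₁(2/3,2/3,4/3;u)` and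
`t(s) = s·h(u)/g(u)` where `u = -s³/27`, one has `dt/ds = 1/((1-u)·g(u)²)`
for `s` near `0`. -/
theorem stmt14 :
    ∃ ε > (0 : ℝ), ∀ s : ℂ, ‖s‖ < ε →
      HasDerivAt
        (fun z : ℂ => z * hyp2F1 (2/3) (2/3) (4/3) (-(z ^ 3) / 27) /
          hyp2F1 (1/3) (1/3) (2/3) (-(z ^ 3) / 27))
        (1 / ((1 - (-(s ^ 3) / 27)) * (hyp2F1 (1/3) (1/3) (2/3) (-(s ^ 3) / 27)) ^ 2))
        s := by
  have hcube : Tendsto (fun s : ℂ => -(s ^ 3) / 27) (𝓝 0) (𝓝 0) := by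
    simpa using ((continuous_pow 3).neg.div_const (27 : ℂ)).tendsto 0
  obtain ⟨ε, hε, hnear⟩ := Metric.eventually_nhds_iff.mp
    ((hcube.eventually (Metric.ball_mem_nhds 0 one_pos)).and
      (hcube.eventually (eventually_hyp2F1_ne_zero norm_coeff_ratio_le_g)))
  refine ⟨ε, hε, fun s hs => ?_⟩
  obtain ⟨hu, hg⟩ := hnear (by simpa using hs)
  exact hasDerivAt_flat_coordinate (mem_ball_zero_iff.mp hu) hg
end
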